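/- (Crude dual-norm bound used in the proof of Theorem 1.) In the CBwK setting, let b > 0 with 2b < min B. If the problem (r,c,B−2b·1,ν) is feasible, then any minimizer λ*_{B−b·1} of λ ↦ L(λ, B−b·1) over λ ∈ [0,∞)^d satisfies ‖λ*_{B−b·1}‖ ≤ 2/b. -/

import Mathlib

open MeasureTheory Finset

namespace CBwK

variable {X : Type*} [MeasurableSpace X] {A : Type*} [Fintype A] [Nonempty A] {d : ℕ}

/-- A static policy: a measurable map `X → P(A)` with components `(π_a)_{a∈A}`. -/
def IsPolicy (π : X → A → ℝ) : Prop :=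
  (∀ x a, 0 ≤ π x a) ∧ (∀ x, ∑ a, π x a = 1) ∧ (∀ a, Measurable fun x => π x a)

/-- Expected reward `E_{X∼ν}[Σ_a r(X,a) π_a(X)]` of a policy. -/
noncomputable def polReward (ν : Measure X) (r : X → A → ℝ) (π : X → A → ℝ) : ℝ :=
  ∫ x, ∑ a, r x a * π x a ∂ν

/-- Component `i` of the expected cost vector `E_{X∼ν}[Σ_a c(X,a) π_a(X)]` of a policy. -/
noncomputable def polCost (ν : Measure X) (c : X → A → Fin d → ℝ) (π : X → A → ℝ)
    (i : Fin d) : ℝ :=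
  ∫ x, ∑ a, c x a i * π x a ∂ν

/-- The problem `(r,c,B',ν)` is feasible. -/
def Feasible (ν : Measure X) (c : X → A → Fin d → ℝ) (B' : Fin d → ℝ) : Prop :=
  ∃ π, IsPolicy π ∧ ∀ i, polCost ν c π i ≤ B' i

/-- `OPT(r,c,B')`: optimal expected reward under the expected-cost constraints `B'`. -/
noncomputable def OPT (ν : Measure X) (r : X → A → ℝ) (c : X → A → Fin d → ℝ)
    (B' : Fin d → ℝ) : ℝ :=
  sSup {y : ℝ | ∃ π, IsPolicy π ∧ (∀ i, polCost ν c π i ≤ B' i) ∧ y = polReward ν r π}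

/-- `L(λ,C) = E_{X∼ν}[ max_a { r(X,a) − ⟨c(X,a) − C, λ⟩ } ]`. -/
noncomputable def L (ν : Measure X) (r : X → A → ℝ) (c : X → A → Fin d → ℝ)
    (lam : Fin d → ℝ) (C : Fin d → ℝ) : ℝ :=
  ∫ x, Finset.univ.sup' Finset.univ_nonempty
    (fun a => r x a - ∑ i, (c x a i - C i) * lam i) ∂ν

/-- Euclidean norm on `ℝ^d`. -/
noncomputable def enorm (v : Fin d → ℝ) : ℝ := Real.sqrt (∑ i, (v i) ^ 2)

/-- ℓ1-norm on `ℝ^d`. -/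
noncomputable def l1norm (v : Fin d → ℝ) : ℝ := ∑ i, |v i|

/-- Smallest component of a vector of `ℝ^d` (junk value `0` if `d = 0`). -/
noncomputable def minComp (v : Fin d → ℝ) : ℝ := ⨅ i, v i


end CBwK

/-!
Weak duality: averaging the Lagrangian `r - ⟨c - C, λ⟩` over the actions chosen by a policy
feasible for the budget `B - 2b` shows `L(λ, B - b) ≥ E[reward] + b ‖λ‖₁ ≥ b ‖λ‖₁` for every
`λ ≥ 0`. On the other hand minimality of `λ*` gives `L(λ*, B - b) ≤ L(0, B - b) = E[max_a r] ≤ 1`.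
Hence `‖λ*‖₂ ≤ ‖λ*‖₁ ≤ 1 / b`.
-/

namespace CBwK

variable {X : Type*} [MeasurableSpace X] {ν : Measure X} {A : Type*} [Fintype A] {d : ℕ}

theorem IsPolicy.le_one {π : X → A → ℝ} (hπ : IsPolicy π) (x : X) (a : A) : π x a ≤ 1 :=
  hπ.2.1 x ▸ single_le_sum (fun a' _ => hπ.1 x a') (mem_univ a)

theorem IsPolicy.integrable_sum_mul {π : X → A → ℝ} (hπ : IsPolicy π) {f : A → X → ℝ}
    (hf : ∀ a, Integrable (f a) ν) : Integrable (fun x => ∑ a, f a x * π x a) ν :=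
  integrable_finsetSum _ fun a _ => (hf a).mul_bdd (hπ.2.2 a).aestronglyMeasurable
    (ae_of_all _ fun x => by
      rw [Real.norm_eq_abs, abs_of_nonneg (hπ.1 x a)]; exact hπ.le_one x a)

theorem sum_mul_le_sup' [Nonempty A] {w g : A → ℝ} (hw0 : ∀ a, 0 ≤ w a) (hw1 : ∑ a, w a = 1) :
    ∑ a, g a * w a ≤ univ.sup' univ_nonempty g :=
  calc ∑ a, g a * w a ≤ ∑ a, univ.sup' univ_nonempty g * w a :=
        sum_le_sum fun a _ => mul_le_mul_of_nonneg_right (le_sup' g (mem_univ a)) (hw0 a)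
    _ = univ.sup' univ_nonempty g := by rw [← mul_sum, hw1, mul_one]

theorem integrable_sup' {ι : Type*} {s : Finset ι} (hs : s.Nonempty) {f : ι → X → ℝ}
    (hf : ∀ i ∈ s, Integrable (f i) ν) : Integrable (fun x => s.sup' hs fun i => f i x) ν := by
  simp_rw [← Finset.sup'_apply]
  exact sup'_induction hs (p := fun g => Integrable g ν) _ (fun _ h₁ _ h₂ => h₁.sup h₂) hf

theorem sum_lagrangian_mul {w : A → ℝ} (hw : ∑ a, w a = 1) (r : A → ℝ) (c : A → Fin d → ℝ)
    (lam C : Fin d → ℝ) :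
    ∑ a, (r a - ∑ i, (c a i - C i) * lam i) * w a
      = ∑ a, r a * w a - ∑ i, lam i * (∑ a, c a i * w a - C i) := by
  have hC : ∀ i, C i = ∑ a, C i * w a := fun i => by rw [← mul_sum, hw, mul_one]
  conv_rhs => rw [funext hC]
  simp only [← sum_sub_distrib, mul_sum, sub_mul, sum_mul]
  rw [sum_sub_distrib, sum_comm (s := univ (α := Fin d))]
  congr 1
  exact sum_congr rfl fun _ _ => sum_congr rfl fun _ _ => by ring

theorem polReward_sub_le_L [IsProbabilityMeasure ν] [Nonempty A] {r : X → A → ℝ}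
    {c : X → A → Fin d → ℝ} (hr : ∀ a, Integrable (fun x => r x a) ν)
    (hc : ∀ a i, Integrable (fun x => c x a i) ν) {π : X → A → ℝ} (hπ : IsPolicy π)
    (lam C : Fin d → ℝ) :
    polReward ν r π - ∑ i, lam i * (polCost ν c π i - C i) ≤ L ν r c lam C := by
  have hcost (i : Fin d) : Integrable (fun x => ∑ a, c x a i * π x a) ν :=
    hπ.integrable_sum_mul fun a => hc a i
  calc polReward ν r π - ∑ i, lam i * (polCost ν c π i - C i)
      = ∫ x, (∑ a, r x a * π x a - ∑ i, lam i * (∑ a, c x a i * π x a - C i)) ∂ν := by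
        have hterm (i : Fin d) :
            Integrable (fun x => lam i * (∑ a, c x a i * π x a - C i)) ν :=
          ((hcost i).sub (integrable_const _)).const_mul _
        rw [integral_sub (hπ.integrable_sum_mul hr) (integrable_finsetSum _ fun i _ => hterm i),
          integral_finsetSum _ fun i _ => hterm i]
        simp_rw [integral_const_mul, integral_sub (hcost _) (integrable_const _)]
        simp [polReward, polCost]
    _ = ∫ x, ∑ a, (r x a - ∑ i, (c x a i - C i) * lam i) * π x a ∂ν := by
        simp_rw [sum_lagrangian_mul (hπ.2.1 _)]
    _ ≤ L ν r c lam C := by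
        have hlag (a : A) : Integrable (fun x => r x a - ∑ i, (c x a i - C i) * lam i) ν :=
          (hr a).sub <| integrable_finsetSum _ fun i _ =>
            ((hc a i).sub (integrable_const _)).mul_const _
        exact integral_mono (hπ.integrable_sum_mul hlag) (integrable_sup' _ fun a _ => hlag a)
          fun x => sum_mul_le_sup' (hπ.1 x) (hπ.2.1 x)

theorem L_zero_le [IsProbabilityMeasure ν] [Nonempty A] {r : X → A → ℝ} {R : ℝ}
    (hr : ∀ a, Integrable (fun x => r x a) ν) (hrR : ∀ x a, r x a ≤ R)
    (c : X → A → Fin d → ℝ) (C : Fin d → ℝ) : L ν r c 0 C ≤ R := by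
  simp only [L, Pi.zero_apply, mul_zero, sum_const_zero, sub_zero]
  calc ∫ x, univ.sup' univ_nonempty (r x) ∂ν ≤ ∫ _, R ∂ν :=
        integral_mono (integrable_sup' _ fun a _ => hr a) (integrable_const R)
          fun x => sup'_le _ _ fun a _ => hrR x a
    _ = R := by simp

theorem enorm_le_l1norm (v : Fin d → ℝ) : enorm v ≤ l1norm v := by
  have h := sum_sq_le_sq_sum_of_nonneg (s := univ) fun i _ => abs_nonneg (v i)
  simp only [sq_abs] at h
  exact (Real.sqrt_le_left (sum_nonneg fun i _ => abs_nonneg (v i))).2 h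

theorem dual_norm_crude_bound_general
    {X : Type*} [MeasurableSpace X] (ν : Measure X) [IsProbabilityMeasure ν]
    {A : Type*} [Fintype A] [Nonempty A] {d : ℕ}
    (r : X → A → ℝ) (c : X → A → Fin d → ℝ) (B : Fin d → ℝ) (b : ℝ)
    (hr : ∀ x a, r x a ∈ Set.Icc (0 : ℝ) 1)
    (hc : ∀ x a i, c x a i ∈ Set.Icc (-1 : ℝ) 1)
    (hrm : ∀ a, Measurable fun x => r x a)
    (hcm : ∀ a i, Measurable fun x => c x a i)
    (hb : 0 < b)
    (hfeas : Feasible ν c (fun i => B i - 2 * b))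
    (lamstar : Fin d → ℝ) (hls0 : ∀ i, 0 ≤ lamstar i)
    (hmin : ∀ lam : Fin d → ℝ, (∀ i, 0 ≤ lam i) →
      L ν r c lamstar (fun i => B i - b) ≤ L ν r c lam (fun i => B i - b)) :
    enorm lamstar ≤ 2 / b := by
  obtain ⟨π, hπ, hπB⟩ := hfeas
  have hri (a : A) : Integrable (fun x => r x a) ν :=
    .of_mem_Icc 0 1 (hrm a).aemeasurable (ae_of_all _ fun x => hr x a)
  have hci (a : A) (i : Fin d) : Integrable (fun x => c x a i) ν :=
    .of_mem_Icc (-1) 1 (hcm a i).aemeasurable (ae_of_all _ fun x => hc x a i)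
  have hdual := polReward_sub_le_L hri hci hπ lamstar fun i => B i - b
  have hL : L ν r c lamstar (fun i => B i - b) ≤ 1 :=
    (hmin 0 fun _ => le_rfl).trans (L_zero_le hri (fun x a => (hr x a).2) _ _)
  have hreward : 0 ≤ polReward ν r π :=
    integral_nonneg fun x => sum_nonneg fun a _ => mul_nonneg (hr x a).1 (hπ.1 x a)
  have hslack : ∑ i, lamstar i * (polCost ν c π i - (B i - b)) ≤ -(b * l1norm lamstar) := by
    rw [l1norm, mul_sum, ← sum_neg_distrib]
    refine sum_le_sum fun i _ => ?_
    rw [abs_of_nonneg (hls0 i)]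
    nlinarith [hπB i, hls0 i]
  have hl1 : l1norm lamstar ≤ 1 / b := by
    rw [le_div_iff₀' hb]
    linarith
  calc enorm lamstar ≤ l1norm lamstar := enorm_le_l1norm lamstar
    _ ≤ 1 / b := hl1
    _ ≤ 2 / b := by gcongr; norm_num

/-- Crude dual-norm bound used in the proof of Theorem 1: if `b > 0` with `2b < min B`,
and the problem `(r,c,B−2b·1,ν)` is feasible, then any minimizer `λ*_{B−b·1}` of
`λ ↦ L(λ, B−b·1)` over `λ ≥ 0` satisfies `‖λ*_{B−b·1}‖ ≤ 2/b`. -/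
theorem dual_norm_crude_bound
    {X : Type*} [MeasurableSpace X] (ν : Measure X) [IsProbabilityMeasure ν]
    {A : Type*} [Fintype A] [Nonempty A] {d : ℕ} (hd : 0 < d)
    (r : X → A → ℝ) (c : X → A → Fin d → ℝ) (B : Fin d → ℝ) (b : ℝ)
    (hr : ∀ x a, r x a ∈ Set.Icc (0 : ℝ) 1)
    (hc : ∀ x a i, c x a i ∈ Set.Icc (-1 : ℝ) 1)
    (hrm : ∀ a, Measurable fun x => r x a)
    (hcm : ∀ a i, Measurable fun x => c x a i)
    (hb : 0 < b) (h2b : 2 * b < minComp B)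
    (hfeas : Feasible ν c (fun i => B i - 2 * b))
    (lamstar : Fin d → ℝ) (hls0 : ∀ i, 0 ≤ lamstar i)
    (hmin : ∀ lam : Fin d → ℝ, (∀ i, 0 ≤ lam i) →
      L ν r c lamstar (fun i => B i - b) ≤ L ν r c lam (fun i => B i - b)) :
    enorm lamstar ≤ 2 / b :=
  dual_norm_crude_bound_general ν r c B b hr hc hrm hcm hb hfeas lamstar hls0 hmin

end CBwK
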